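/- arXiv:1907.01712 — 2 statements merged into one kernel-verified Lean document; each statement's English description precedes it below -/
import Mathlib

section
/- Let Γ be a BCR diagram of degree k (that is, with 2k vertices). Let L be the number of edges of Γ that are not legs, and let r be the number of bivalent vertices of Γ whose outgoing edge is external. Then L + r ≡ k (mod 2). -/
open Finset

/-- A finite directed graph with a distinguished set of internal vertices `Vi`
and a distinguished set of internal edges `Ei`. Edges are ordered pairs of
vertices, so there are no multiple edges with the same orientation. -/
structure DiGraph (V : Type*) [DecidableEq V] [Fintype V] where
  E : Finset (V × V)
  Vi : Finset V
  Ei : Finset (V × V)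

namespace DiGraph

variable {V : Type*} [DecidableEq V] [Fintype V] (G : DiGraph V)

/-- The external edges. -/
def Ee : Finset (V × V) := G.E \ G.Ei

/-- The external vertices. -/
def Ve : Finset V := G.Viᶜ

/-- The edges going out of `v`. -/
def outE (v : V) : Finset (V × V) := G.E.filter fun e => e.1 = v

/-- The edges coming into `v`. -/
def inE (v : V) : Finset (V × V) := G.E.filter fun e => e.2 = v

/-- The valence of a vertex. -/
def valence (v : V) : ℕ := (G.outE v).card + (G.inE v).card

def Univalent (v : V) : Prop := G.valence v = 1

def Bivalent (v : V) : Prop := G.valence v = 2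

def Trivalent (v : V) : Prop := G.valence v = 3

/-- A leg is an external edge whose source is a univalent vertex. -/
def IsLeg (e : V × V) : Prop := e ∈ G.Ee ∧ G.Univalent e.1

/-- `v` is external and trivalent, with two incoming external edges and one
outgoing external edge, and one of the incoming edges comes from a univalent
vertex. -/
def Cond1 (v : V) : Prop :=
  v ∉ G.Vi ∧
  (∃ e, G.outE v = {e} ∧ e ∈ G.Ee) ∧
  (∃ e f, e ≠ f ∧ G.inE v = {e, f} ∧ e ∈ G.Ee ∧ f ∈ G.Ee) ∧
  (∃ e ∈ G.inE v, G.Univalent e.1)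

/-- `v` is internal and trivalent, with one incoming internal edge, one
outgoing internal edge, and one incoming external edge coming from a
univalent vertex. -/
def Cond2 (v : V) : Prop :=
  v ∈ G.Vi ∧
  (∃ e, G.outE v = {e} ∧ e ∈ G.Ei) ∧
  (∃ e f, e ≠ f ∧ G.inE v = {e, f} ∧ e ∈ G.Ei ∧ f ∈ G.Ee ∧ G.Univalent f.1)

/-- `v` is internal and univalent, with one outgoing external edge. -/
def Cond3 (v : V) : Prop :=
  v ∈ G.Vi ∧ (∃ e, G.outE v = {e} ∧ e ∈ G.Ee) ∧ G.inE v = ∅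

/-- `v` is internal and bivalent, with one incoming external edge and one
outgoing internal edge. -/
def Cond4 (v : V) : Prop :=
  v ∈ G.Vi ∧ (∃ e, G.outE v = {e} ∧ e ∈ G.Ei) ∧ (∃ f, G.inE v = {f} ∧ f ∈ G.Ee)

/-- `v` is internal and bivalent, with one incoming internal edge and one
outgoing external edge. -/
def Cond5 (v : V) : Prop :=
  v ∈ G.Vi ∧ (∃ e, G.outE v = {e} ∧ e ∈ G.Ee) ∧ (∃ f, G.inE v = {f} ∧ f ∈ G.Ei)

/-- The (undirected) adjacency relation of the underlying graph. -/
def Adj (a b : V) : Prop := (a, b) ∈ G.E ∨ (b, a) ∈ G.E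

/-- `G` is a BCR diagram: edges join distinct vertices, internal edges are
edges, the underlying graph is connected, and every vertex satisfies one of
the five conditions. -/
def IsBCR : Prop :=
  (∀ e ∈ G.E, e.1 ≠ e.2) ∧
  G.Ei ⊆ G.E ∧
  (∀ v w : V, Relation.ReflTransGen G.Adj v w) ∧
  (∀ v : V, G.Cond1 v ∨ G.Cond2 v ∨ G.Cond3 v ∨ G.Cond4 v ∨ G.Cond5 v)

end DiGraph

open scoped Classical

namespace DiGraph

variable {V : Type*} [DecidableEq V] [Fintype V] (G : DiGraph V)

lemma not_Ei_of_Ee {e : V × V} (h : e ∈ G.Ee) : e ∉ G.Ei :=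
  (Finset.mem_sdiff.1 h).2

lemma oi_eq_inter (hEi : G.Ei ⊆ G.E) (v : V) :
    (G.Ei.filter fun e => e.1 = v) = G.outE v ∩ G.Ei := by
  ext e
  simp only [Finset.mem_filter, Finset.mem_inter, outE]
  constructor
  · rintro ⟨h1, h2⟩
    exact ⟨⟨hEi h1, h2⟩, h1⟩
  · rintro ⟨⟨-, h2⟩, h3⟩
    exact ⟨h3, h2⟩

lemma ii_eq_inter (hEi : G.Ei ⊆ G.E) (v : V) :
    (G.Ei.filter fun e => e.2 = v) = G.inE v ∩ G.Ei := by
  ext e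
  simp only [Finset.mem_filter, Finset.mem_inter, inE]
  constructor
  · rintro ⟨h1, h2⟩
    exact ⟨⟨hEi h1, h2⟩, h1⟩
  · rintro ⟨⟨-, h2⟩, h3⟩
    exact ⟨h3, h2⟩

lemma pair_inter_empty {a b : V × V} (ha : a ∉ G.Ei) (hb : b ∉ G.Ei) :
    ({a, b} : Finset (V × V)) ∩ G.Ei = ∅ := by
  rw [Finset.eq_empty_iff_forall_notMem]
  intro x hx
  rw [Finset.mem_inter, Finset.mem_insert, Finset.mem_singleton] at hx
  rcases hx with ⟨rfl | rfl, hxi⟩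
  · exact ha hxi
  · exact hb hxi

lemma pair_inter_left {a b : V × V} (ha : a ∈ G.Ei) (hb : b ∉ G.Ei) :
    ({a, b} : Finset (V × V)) ∩ G.Ei = {a} := by
  ext x
  rw [Finset.mem_inter, Finset.mem_insert, Finset.mem_singleton, Finset.mem_singleton]
  constructor
  · rintro ⟨rfl | rfl, hxi⟩
    · rfl
    · exact absurd hxi hb
  · rintro rfl
    exact ⟨Or.inl rfl, ha⟩

lemma outE_card_one (hG : G.IsBCR) (v : V) : (G.outE v).card = 1 := by
  rcases hG.2.2.2 v with ⟨-, ⟨e, he, -⟩, -⟩ | ⟨-, ⟨e, he, -⟩, -⟩ | ⟨-, ⟨e, he, -⟩, -⟩ |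
    ⟨-, ⟨e, he, -⟩, -⟩ | ⟨-, ⟨e, he, -⟩, -⟩ <;> simp [he]

lemma univalent_cond3 (hG : G.IsBCR) (v : V) (hu : G.Univalent v) : G.Cond3 v := by
  unfold Univalent valence at hu
  rcases hG.2.2.2 v with h | h | h | h | h
  · obtain ⟨-, ⟨e, hout, -⟩, ⟨a, b, hab, hin, -⟩, -⟩ := h
    rw [hout, hin, Finset.card_singleton, Finset.card_pair hab] at hu
    omega
  · obtain ⟨-, ⟨e, hout, -⟩, ⟨a, b, hab, hin, -⟩⟩ := h
    rw [hout, hin, Finset.card_singleton, Finset.card_pair hab] at hu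
    omega
  · exact h
  · obtain ⟨-, ⟨e, hout, -⟩, ⟨f, hin, -⟩⟩ := h
    rw [hout, hin, Finset.card_singleton, Finset.card_singleton] at hu
    omega
  · obtain ⟨-, ⟨e, hout, -⟩, ⟨f, hin, -⟩⟩ := h
    rw [hout, hin, Finset.card_singleton, Finset.card_singleton] at hu
    omega

lemma bivalent_ext_iff (hG : G.IsBCR) (v : V) :
    (G.Bivalent v ∧ ∃ e ∈ G.outE v, e ∈ G.Ee) ↔ G.Cond5 v := by
  constructor
  · rintro ⟨hb, e', he'out, he'Ee⟩
    unfold Bivalent valence at hb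
    rcases hG.2.2.2 v with h | h | h | h | h
    · obtain ⟨-, ⟨e, hout, -⟩, ⟨a, b, hab, hin, -⟩, -⟩ := h
      rw [hout, hin, Finset.card_singleton, Finset.card_pair hab] at hb
      omega
    · obtain ⟨-, ⟨e, hout, -⟩, ⟨a, b, hab, hin, -⟩⟩ := h
      rw [hout, hin, Finset.card_singleton, Finset.card_pair hab] at hb
      omega
    · obtain ⟨-, ⟨e, hout, -⟩, hin⟩ := h
      rw [hout, hin, Finset.card_singleton, Finset.card_empty] at hb
      omega
    · obtain ⟨-, ⟨e, hout, heEi⟩, -⟩ := h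
      rw [hout, Finset.mem_singleton] at he'out
      subst he'out
      exact absurd heEi (G.not_Ei_of_Ee he'Ee)
    · exact h
  · rintro h
    obtain ⟨-, ⟨e, hout, heEe⟩, ⟨f, hin, -⟩⟩ := h
    refine ⟨?_, e, ?_, heEe⟩
    · unfold Bivalent valence
      rw [hout, hin, Finset.card_singleton, Finset.card_singleton]
    · rw [hout]
      exact Finset.mem_singleton_self e

lemma legs_fiber (hG : G.IsBCR) (v : V) :
    ((G.E.filter fun e => G.IsLeg e).filter fun e => e.1 = v).card
      = if G.Cond3 v then 1 else 0 := by
  split_ifs with h3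
  · obtain ⟨hvi, ⟨f, hout, hfEe⟩, hin⟩ := h3
    have heq : (G.E.filter fun e => G.IsLeg e).filter (fun e => e.1 = v) = G.outE v := by
      ext e
      simp only [Finset.mem_filter, outE]
      constructor
      · rintro ⟨⟨h1, -⟩, h2⟩
        exact ⟨h1, h2⟩
      · rintro ⟨h1, h2⟩
        have heo : e ∈ G.outE v := Finset.mem_filter.2 ⟨h1, h2⟩
        rw [hout, Finset.mem_singleton] at heo
        subst heo
        refine ⟨⟨h1, hfEe, ?_⟩, h2⟩
        unfold Univalent valence
        rw [h2, hout, hin]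
        simp
    rw [heq, hout, Finset.card_singleton]
  · rw [Finset.card_eq_zero, Finset.eq_empty_iff_forall_notMem]
    intro e he
    rw [Finset.mem_filter, Finset.mem_filter] at he
    obtain ⟨⟨-, -, hu⟩, h2⟩ := he
    rw [h2] at hu
    exact h3 (G.univalent_cond3 hG v hu)

lemma cond_pointwise (hG : G.IsBCR) (v : V) :
    (G.inE v).card + (G.Ei.filter fun e => e.1 = v).card
      + 2 * (if G.Cond3 v then 1 else 0) + 2 * (if G.Cond5 v then 1 else 0)
      = 2 + (G.Ei.filter fun e => e.2 = v).card := by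
  have hEi := hG.2.1
  rw [G.oi_eq_inter hEi v, G.ii_eq_inter hEi v]
  rcases hG.2.2.2 v with h | h | h | h | h
  · obtain ⟨hvi, ⟨e, hout, heEe⟩, ⟨a, b, hab, hin, haE, hbE⟩, -⟩ := h
    have h3 : ¬ G.Cond3 v := fun hc => hvi hc.1
    have h5 : ¬ G.Cond5 v := fun hc => hvi hc.1
    rw [hout, hin, if_neg h3, if_neg h5,
      Finset.singleton_inter_of_notMem (G.not_Ei_of_Ee heEe),
      G.pair_inter_empty (G.not_Ei_of_Ee haE) (G.not_Ei_of_Ee hbE),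
      Finset.card_pair hab]
    simp
  · obtain ⟨hvi, ⟨e, hout, heEi⟩, ⟨a, b, hab, hin, haEi, hbEe, -⟩⟩ := h
    have h3 : ¬ G.Cond3 v := by
      rintro ⟨-, -, hc⟩
      rw [hc] at hin
      exact (Finset.insert_ne_empty a {b}) hin.symm
    have h5 : ¬ G.Cond5 v := by
      rintro ⟨-, ⟨e', hout', he'Ee⟩, -⟩
      rw [hout] at hout'
      rw [Finset.singleton_inj] at hout'
      subst hout'
      exact (G.not_Ei_of_Ee he'Ee) heEi
    rw [hout, hin, if_neg h3, if_neg h5,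
      Finset.singleton_inter_of_mem heEi,
      G.pair_inter_left haEi (G.not_Ei_of_Ee hbEe),
      Finset.card_pair hab]
    simp
  · obtain ⟨hvi, ⟨e, hout, heEe⟩, hin⟩ := h
    have h5 : ¬ G.Cond5 v := by
      rintro ⟨-, -, ⟨f, hin', -⟩⟩
      rw [hin] at hin'
      exact (Finset.singleton_ne_empty f) hin'.symm
    rw [hout, hin, if_pos ⟨hvi, ⟨e, hout, heEe⟩, hin⟩, if_neg h5,
      Finset.singleton_inter_of_notMem (G.not_Ei_of_Ee heEe)]
    simp
  · obtain ⟨hvi, ⟨e, hout, heEi⟩, ⟨f, hin, hfEe⟩⟩ := h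
    have h3 : ¬ G.Cond3 v := by
      rintro ⟨-, -, hc⟩
      rw [hc] at hin
      exact (Finset.singleton_ne_empty f) hin.symm
    have h5 : ¬ G.Cond5 v := by
      rintro ⟨-, ⟨e', hout', he'Ee⟩, -⟩
      rw [hout] at hout'
      rw [Finset.singleton_inj] at hout'
      subst hout'
      exact (G.not_Ei_of_Ee he'Ee) heEi
    rw [hout, hin, if_neg h3, if_neg h5,
      Finset.singleton_inter_of_mem heEi,
      Finset.singleton_inter_of_notMem (G.not_Ei_of_Ee hfEe)]
    simp
  · obtain ⟨hvi, ⟨e, hout, heEe⟩, ⟨f, hin, hfEi⟩⟩ := h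
    have h3 : ¬ G.Cond3 v := by
      rintro ⟨-, -, hc⟩
      rw [hc] at hin
      exact (Finset.singleton_ne_empty f) hin.symm
    rw [hout, hin, if_neg h3, if_pos ⟨hvi, ⟨e, hout, heEe⟩, ⟨f, hin, hfEi⟩⟩,
      Finset.singleton_inter_of_notMem (G.not_Ei_of_Ee heEe),
      Finset.singleton_inter_of_mem hfEi]
    simp

end DiGraph

/-- For a BCR diagram of degree `k` (i.e. with `2k` vertices), if `L` is the
number of edges that are not legs and `r` is the number of bivalent vertices
whose outgoing edge is external, then `L + r ≡ k (mod 2)`. -/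
theorem bcr_cycle_length_parity {V : Type*} [DecidableEq V] [Fintype V]
    (G : DiGraph V) (hG : G.IsBCR) (k : ℕ) (hk : Fintype.card V = 2 * k) :
    (G.E.filter fun e => ¬ G.IsLeg e).card
      + (Finset.univ.filter fun v : V =>
          G.Bivalent v ∧ ∃ e ∈ G.outE v, e ∈ G.Ee).card
      ≡ k [MOD 2] := by
  classical
  have hEi := hG.2.1
  -- |E| = 2k since every vertex has out-degree one
  have hEcard : G.E.card = 2 * k := by
    rw [Finset.card_eq_sum_card_fiberwise (f := fun e : V × V => e.1) (t := Finset.univ)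
      (fun e _ => Finset.mem_univ e.1)]
    have h1 : ∀ v ∈ (Finset.univ : Finset V), (G.E.filter fun a => a.1 = v).card = 1 :=
      fun v _ => G.outE_card_one hG v
    rw [Finset.sum_congr rfl h1]
    simp [Finset.card_univ, hk]
  -- sum of in-degrees is |E|
  have hInSum : ∑ v : V, (G.inE v).card = 2 * k := by
    rw [← hEcard]
    exact (Finset.card_eq_sum_card_fiberwise (f := fun e : V × V => e.2) (t := Finset.univ)
      (fun e _ => Finset.mem_univ e.2)).symm
  have hOiSum : ∑ v : V, (G.Ei.filter fun e => e.1 = v).card = G.Ei.card :=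
    (Finset.card_eq_sum_card_fiberwise (f := fun e : V × V => e.1) (t := Finset.univ)
      (fun e _ => Finset.mem_univ e.1)).symm
  have hIiSum : ∑ v : V, (G.Ei.filter fun e => e.2 = v).card = G.Ei.card :=
    (Finset.card_eq_sum_card_fiberwise (f := fun e : V × V => e.2) (t := Finset.univ)
      (fun e _ => Finset.mem_univ e.2)).symm
  set S3 : ℕ := ∑ v : V, (if G.Cond3 v then 1 else 0) with hS3
  set S5 : ℕ := ∑ v : V, (if G.Cond5 v then 1 else 0) with hS5
  -- summing the pointwise identity
  have hsum : ∑ v : V, ((G.inE v).card + (G.Ei.filter fun e => e.1 = v).card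
      + 2 * (if G.Cond3 v then 1 else 0) + 2 * (if G.Cond5 v then 1 else 0))
      = ∑ v : V, (2 + (G.Ei.filter fun e => e.2 = v).card) :=
    Finset.sum_congr rfl fun v _ => G.cond_pointwise hG v
  rw [Finset.sum_add_distrib, Finset.sum_add_distrib, Finset.sum_add_distrib,
    Finset.sum_add_distrib, ← Finset.mul_sum, ← Finset.mul_sum, ← hS3, ← hS5,
    hInSum, hOiSum, hIiSum, Finset.sum_const, Finset.card_univ, hk, smul_eq_mul] at hsum
  -- hsum : 2*k + Ei.card + 2*S3 + 2*S5 = 2*k*2 + Ei.card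
  have hkey : S3 + S5 = k := by omega
  -- number of legs is S3
  have hLegs : (G.E.filter fun e => G.IsLeg e).card = S3 := by
    rw [Finset.card_eq_sum_card_fiberwise (f := fun e : V × V => e.1) (t := Finset.univ)
      (fun e _ => Finset.mem_univ e.1)]
    exact Finset.sum_congr rfl fun v _ => G.legs_fiber hG v
  -- non-legs + legs = |E|
  have hsplit : (G.E.filter fun e => ¬ G.IsLeg e).card
      + (G.E.filter fun e => G.IsLeg e).card = G.E.card := by
    rw [add_comm]
    exact Finset.card_filter_add_card_filter_not _
  -- the bivalent-with-external-outgoing vertices are the Cond5 ones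
  have hr : (Finset.univ.filter fun v : V =>
      G.Bivalent v ∧ ∃ e ∈ G.outE v, e ∈ G.Ee).card = S5 := by
    rw [Finset.card_filter]
    exact Finset.sum_congr rfl fun v _ =>
      if_congr (G.bivalent_ext_iff hG v) rfl rfl
  rw [hr]
  have hmod : ((G.E.filter fun e => ¬ G.IsLeg e).card + S5) % 2 = k % 2 := by omega
  exact hmod
end

section
/- Let Γ be a BCR diagram and let S ⊆ V(Γ) with |S| ≥ 2 and S ≠ V(Γ). Let Γ_S be the subgraph of Γ induced on S (its vertices are the elements of S and its edges are the edges of Γ with both endpoints in S). Assume: (a) S is not a pair of vertices joined by exactly one edge; (b) Γ_S is connected; (c) it is not the case that Γ_S has at least three vertices and possesses a vertex v0 of valence one in Γ_S such that v0 is external, or v0 is internal and the unique edge of Γ_S adjacent to v0 is internal; (d) Γ_S possesses no vertex v that is trivalent in Γ and bivalent in Γ_S with one incoming and one outgoing edge in Γ_S, these two edges being both internal whenever v is internal. Then: (i) whenever S contains the target of an external edge of Γ, it also contains its source; (ii) whenever S contains a univalent vertex, it also contains the target of the leg issued from that vertex; (iii) S contains at least one non-univalent vertex of Γ, but does not contain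 all the non-univalent vertices of Γ. -/
open Finset

namespace DiGraph

variable {V : Type*} [DecidableEq V] [Fintype V] (G : DiGraph V)

/-- The edges of the subgraph of `G` induced on `S`. -/
def inducedE (S : Finset V) : Finset (V × V) :=
  G.E.filter fun e => e.1 ∈ S ∧ e.2 ∈ S

/-- The valence of `v` in the subgraph of `G` induced on `S`. -/
def valenceIn (S : Finset V) (v : V) : ℕ :=
  ((G.inducedE S).filter fun e => e.1 = v).card
    + ((G.inducedE S).filter fun e => e.2 = v).card

end DiGraph

namespace DiGraph

variable {V : Type*} [DecidableEq V] [Fintype V] (G : DiGraph V)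

lemma mem_inducedE' {S : Finset V} {e : V × V} :
    e ∈ G.inducedE S ↔ e ∈ G.E ∧ e.1 ∈ S ∧ e.2 ∈ S := by
  simp [inducedE, Finset.mem_filter]

lemma mem_outE' {v : V} {e : V × V} : e ∈ G.outE v ↔ e ∈ G.E ∧ e.1 = v := by
  simp [outE, Finset.mem_filter]

lemma mem_inE' {v : V} {e : V × V} : e ∈ G.inE v ↔ e ∈ G.E ∧ e.2 = v := by
  simp [inE, Finset.mem_filter]

lemma mem_Ee' {e : V × V} : e ∈ G.Ee ↔ e ∈ G.E ∧ e ∉ G.Ei := by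
  simp [Ee, Finset.mem_sdiff]

lemma cond3_of_univalent (hG : G.IsBCR) {v : V} (hv : G.Univalent v) : G.Cond3 v := by
  have hv' : G.valence v = 1 := hv
  rcases hG.2.2.2 v with h | h | h | h | h
  · obtain ⟨-, ⟨g, hout, -⟩, ⟨a, b, hab, hin, -⟩, -⟩ := h
    have h3 : G.valence v = 3 := by
      rw [valence, hout, hin, Finset.card_singleton,
        Finset.card_insert_of_notMem (by simpa using hab), Finset.card_singleton]
    omega
  · obtain ⟨-, ⟨g, hout, -⟩, ⟨a, b, hab, hin, -⟩⟩ := h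
    have h3 : G.valence v = 3 := by
      rw [valence, hout, hin, Finset.card_singleton,
        Finset.card_insert_of_notMem (by simpa using hab), Finset.card_singleton]
    omega
  · exact h
  · obtain ⟨-, ⟨g, hout, -⟩, ⟨f, hin, -⟩⟩ := h
    have h2 : G.valence v = 2 := by
      rw [valence, hout, hin, Finset.card_singleton, Finset.card_singleton]
    omega
  · obtain ⟨-, ⟨g, hout, -⟩, ⟨f, hin, -⟩⟩ := h
    have h2 : G.valence v = 2 := by
      rw [valence, hout, hin, Finset.card_singleton, Finset.card_singleton]
    omega

lemma not_univalent_target (hG : G.IsBCR) {e : V × V} (he : e ∈ G.E) :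
    ¬ G.Univalent e.2 := by
  intro hu
  obtain ⟨-, -, hin⟩ := G.cond3_of_univalent hG hu
  have : e ∈ G.inE e.2 := G.mem_inE'.mpr ⟨he, rfl⟩
  rw [hin] at this
  exact absurd this (Finset.notMem_empty e)

lemma valenceIn_pos {S : Finset V}
    (hb : ∀ v ∈ S, ∀ w ∈ S, Relation.ReflTransGen
        (fun a b : V => (a, b) ∈ G.inducedE S ∨ (b, a) ∈ G.inducedE S) v w)
    (hcard : 2 ≤ S.card) {v : V} (hv : v ∈ S) : 1 ≤ G.valenceIn S v := by
  obtain ⟨w, hw, hne⟩ := Finset.exists_mem_ne (s := S) (by omega) v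
  rcases (hb v hv w hw).cases_head with h | ⟨c, hc, -⟩
  · exact absurd h.symm hne
  · rw [valenceIn]
    rcases hc with h | h
    · have hm : (v, c) ∈ (G.inducedE S).filter fun e => e.1 = v :=
        Finset.mem_filter.mpr ⟨h, rfl⟩
      have := Finset.card_pos.mpr ⟨_, hm⟩
      omega
    · have hm : (c, v) ∈ (G.inducedE S).filter fun e => e.2 = v :=
        Finset.mem_filter.mpr ⟨h, rfl⟩
      have := Finset.card_pos.mpr ⟨_, hm⟩
      omega

lemma card_inducedE_two (hloop : ∀ e ∈ G.E, e.1 ≠ e.2) {S : Finset V}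
    (h2 : S.card = 2) {v : V} (hv : v ∈ S) :
    (G.inducedE S).card = G.valenceIn S v := by
  obtain ⟨a, b, hab, hS⟩ := Finset.card_eq_two.mp h2
  have key : ∀ x ∈ G.inducedE S, x.1 = v ∨ x.2 = v := by
    intro x hx
    obtain ⟨hxE, hx1, hx2⟩ := G.mem_inducedE'.mp hx
    subst hS
    simp only [Finset.mem_insert, Finset.mem_singleton] at hx1 hx2 hv
    have hne := hloop x hxE
    rcases hv with rfl | rfl <;> rcases hx1 with h1 | h1 <;> rcases hx2 with h2 | h2 <;>
      simp_all
  have hdisj : Disjoint ((G.inducedE S).filter fun e => e.1 = v)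
      ((G.inducedE S).filter fun e => e.2 = v) := by
    rw [Finset.disjoint_left]
    intro x hx1 hx2
    obtain ⟨hxI, h1⟩ := Finset.mem_filter.mp hx1
    obtain ⟨-, h2⟩ := Finset.mem_filter.mp hx2
    exact hloop x (G.mem_inducedE'.mp hxI).1 (h1.trans h2.symm)
  have hun : ((G.inducedE S).filter fun e => e.1 = v) ∪
      ((G.inducedE S).filter fun e => e.2 = v) = G.inducedE S := by
    apply Finset.Subset.antisymm
    · intro x hx
      rcases Finset.mem_union.mp hx with h | h <;> exact (Finset.mem_filter.mp h).1
    · intro x hx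
      rcases key x hx with h | h
      · exact Finset.mem_union_left _ (Finset.mem_filter.mpr ⟨hx, h⟩)
      · exact Finset.mem_union_right _ (Finset.mem_filter.mpr ⟨hx, h⟩)
  rw [valenceIn, ← Finset.card_union_of_disjoint hdisj, hun]

/-- Master contradiction lemma: a vertex of `S` all of whose induced edges are
among one fixed outgoing edge `eo` and one fixed incoming edge `ei` leads to a
contradiction with the hypotheses `ha`, `hc`, `hd`. -/
lemma master (S : Finset V)
    (hcard : 2 ≤ S.card)
    (ha : ¬ (S.card = 2 ∧ (G.inducedE S).card = 1))
    (hb : ∀ v ∈ S, ∀ w ∈ S, Relation.ReflTransGen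
        (fun a b : V => (a, b) ∈ G.inducedE S ∨ (b, a) ∈ G.inducedE S) v w)
    (hc : ¬ (3 ≤ S.card ∧ ∃ v0 ∈ S, G.valenceIn S v0 = 1 ∧
        (v0 ∉ G.Vi ∨ (v0 ∈ G.Vi ∧
          ∀ e ∈ G.inducedE S, (e.1 = v0 ∨ e.2 = v0) → e ∈ G.Ei))))
    (hd : ¬ ∃ v ∈ S, G.Trivalent v ∧ G.valenceIn S v = 2 ∧
        (∃ e ∈ G.inducedE S, e.2 = v) ∧ (∃ f ∈ G.inducedE S, f.1 = v) ∧
        (v ∈ G.Vi → ∀ e ∈ G.inducedE S, (e.1 = v ∨ e.2 = v) → e ∈ G.Ei))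
    (hloop : ∀ e ∈ G.E, e.1 ≠ e.2)
    {v : V} (hv : v ∈ S) (eo ei : V × V)
    (hA : ∀ x ∈ G.inducedE S, x.1 = v → x = eo)
    (hB : ∀ x ∈ G.inducedE S, x.2 = v → x = ei)
    (htri : eo ∈ G.inducedE S → ei ∈ G.inducedE S → G.Trivalent v)
    (hint : v ∈ G.Vi → ∀ x ∈ G.inducedE S, (x.1 = v ∨ x.2 = v) → x ∈ G.Ei) :
    False := by
  set A := (G.inducedE S).filter (fun e => e.1 = v) with hAdef
  set B := (G.inducedE S).filter (fun e => e.2 = v) with hBdef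
  have hAsub : A ⊆ {eo} := by
    intro x hx
    obtain ⟨h1, h2⟩ := Finset.mem_filter.mp hx
    simp [hA x h1 h2]
  have hBsub : B ⊆ {ei} := by
    intro x hx
    obtain ⟨h1, h2⟩ := Finset.mem_filter.mp hx
    simp [hB x h1 h2]
  have hAle : A.card ≤ 1 := by
    have := Finset.card_le_card hAsub
    simpa using this
  have hBle : B.card ≤ 1 := by
    have := Finset.card_le_card hBsub
    simpa using this
  have hval : G.valenceIn S v = A.card + B.card := rfl
  have hpos := G.valenceIn_pos hb hcard hv
  have hcases : G.valenceIn S v = 1 ∨ (A.card = 1 ∧ B.card = 1) := by omega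
  rcases hcases with h1 | ⟨hA1, hB1⟩
  · rcases Nat.lt_or_ge S.card 3 with h | h
    · have h2 : S.card = 2 := by omega
      exact ha ⟨h2, by rw [G.card_inducedE_two hloop h2 hv, h1]⟩
    · refine hc ⟨h, v, hv, h1, ?_⟩
      by_cases hvi : v ∈ G.Vi
      · exact Or.inr ⟨hvi, hint hvi⟩
      · exact Or.inl hvi
  · have hAe : A = {eo} := Finset.eq_of_subset_of_card_le hAsub (by simp [hA1])
    have hBe : B = {ei} := Finset.eq_of_subset_of_card_le hBsub (by simp [hB1])
    have heoA : eo ∈ A := by rw [hAe]; exact Finset.mem_singleton_self eo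
    have heiB : ei ∈ B := by rw [hBe]; exact Finset.mem_singleton_self ei
    obtain ⟨heoI, heo1⟩ := Finset.mem_filter.mp heoA
    obtain ⟨heiI, hei2⟩ := Finset.mem_filter.mp heiB
    exact hd ⟨v, hv, htri heoI heiI, by rw [hval, hA1, hB1], ⟨ei, heiI, hei2⟩,
      ⟨eo, heoI, heo1⟩, hint⟩

end DiGraph

/-- Properties of the subsets `S` of vertices corresponding to the hidden
faces whose contributions do not vanish for simple reasons:
if `S` has at least two elements, is not all of `V(Γ)`, is not a pair of
vertices joined by exactly one edge, induces a connected subgraph `Γ_S`,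
does not give a univalent vertex of `Γ_S` as in the set `h(Γ)` of hidden
faces, and does not give a bivalent vertex of `Γ_S` as in the first family
of cancellations, then: `S` contains the source of any external edge whose
target it contains, `S` contains the target of any leg whose source it
contains, and `S` contains a non-univalent vertex of `Γ` but not all of
them. -/
theorem bcr_hidden_face_structure {V : Type*} [DecidableEq V] [Fintype V]
    (G : DiGraph V) (hG : G.IsBCR) (S : Finset V)
    (hcard : 2 ≤ S.card) (hproper : S ≠ Finset.univ)
    (ha : ¬ (S.card = 2 ∧ (G.inducedE S).card = 1))
    (hb : ∀ v ∈ S, ∀ w ∈ S, Relation.ReflTransGen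
        (fun a b : V => (a, b) ∈ G.inducedE S ∨ (b, a) ∈ G.inducedE S) v w)
    (hc : ¬ (3 ≤ S.card ∧ ∃ v0 ∈ S, G.valenceIn S v0 = 1 ∧
        (v0 ∉ G.Vi ∨ (v0 ∈ G.Vi ∧
          ∀ e ∈ G.inducedE S, (e.1 = v0 ∨ e.2 = v0) → e ∈ G.Ei))))
    (hd : ¬ ∃ v ∈ S, G.Trivalent v ∧ G.valenceIn S v = 2 ∧
        (∃ e ∈ G.inducedE S, e.2 = v) ∧ (∃ f ∈ G.inducedE S, f.1 = v) ∧
        (v ∈ G.Vi → ∀ e ∈ G.inducedE S, (e.1 = v ∨ e.2 = v) → e ∈ G.Ei)) :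
    (∀ e ∈ G.Ee, e.2 ∈ S → e.1 ∈ S) ∧
    (∀ e : V × V, G.IsLeg e → e.1 ∈ S → e.2 ∈ S) ∧
    (∃ v ∈ S, ¬ G.Univalent v) ∧
    (∃ v : V, ¬ G.Univalent v ∧ v ∉ S) := by
  have hloop : ∀ e ∈ G.E, e.1 ≠ e.2 := hG.1
  have hcond := hG.2.2.2
  -- Part (i)
  have part1 : ∀ e ∈ G.Ee, e.2 ∈ S → e.1 ∈ S := by
    intro e he hvS
    by_contra hu
    obtain ⟨heE, heI⟩ := G.mem_Ee'.mp he
    have heIn : e ∈ G.inE e.2 := G.mem_inE'.mpr ⟨heE, rfl⟩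
    -- common facts for the master lemma
    have houtA : ∀ g : V × V, G.outE e.2 = {g} →
        ∀ x ∈ G.inducedE S, x.1 = e.2 → x = g := by
      intro g hout x hxI hx1
      have : x ∈ G.outE e.2 := G.mem_outE'.mpr ⟨(G.mem_inducedE'.mp hxI).1, hx1⟩
      rw [hout] at this
      simpa using this
    rcases hcond e.2 with h | h | h | h | h
    · -- Cond1 : external trivalent
      obtain ⟨hVe, ⟨g, hout, hgEe⟩, ⟨p, q, hpq, hin, hpEe, hqEe⟩, -⟩ := h
      have main : ∀ f' : V × V, (∀ x, x ∈ G.inE e.2 → x = e ∨ x = f') → False := by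
        intro f' hother
        refine G.master S hcard ha hb hc hd hloop hvS g f' (houtA g hout) ?_ ?_ ?_
        · intro x hxI hx2
          have hxin : x ∈ G.inE e.2 := G.mem_inE'.mpr ⟨(G.mem_inducedE'.mp hxI).1, hx2⟩
          rcases hother x hxin with rfl | rfl
          · exact absurd (G.mem_inducedE'.mp hxI).2.1 hu
          · rfl
        · intro _ _
          show G.valence e.2 = 3
          rw [DiGraph.valence, hout, hin, Finset.card_singleton,
            Finset.card_insert_of_notMem (by simpa using hpq), Finset.card_singleton]
        · intro hvi
          exact absurd hvi hVe
      rw [hin] at heIn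
      rcases Finset.mem_insert.mp heIn with rfl | h'
      · refine main q ?_
        intro x hx
        rw [hin] at hx
        simpa using Finset.mem_insert.mp hx
      · have : e = q := by simpa using h'
        subst this
        refine main p ?_
        intro x hx
        rw [hin] at hx
        rcases Finset.mem_insert.mp hx with h1 | h1
        · exact Or.inr h1
        · exact Or.inl (by simpa using h1)
    · -- Cond2 : internal trivalent
      obtain ⟨hVi, ⟨g, hout, hgEi⟩, ⟨p, q, hpq, hin, hpEi, hqEe, -⟩⟩ := h
      rw [hin] at heIn
      have heq : e = q := by
        rcases Finset.mem_insert.mp heIn with rfl | h'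
        · exact absurd hpEi heI
        · simpa using h'
      subst heq
      have hBB : ∀ x ∈ G.inducedE S, x.2 = e.2 → x = p := by
        intro x hxI hx2
        have hxin : x ∈ G.inE e.2 := G.mem_inE'.mpr ⟨(G.mem_inducedE'.mp hxI).1, hx2⟩
        rw [hin] at hxin
        rcases Finset.mem_insert.mp hxin with rfl | h'
        · rfl
        · exfalso
          have : x = e := by simpa using h'
          subst this
          exact hu (G.mem_inducedE'.mp hxI).2.1
      refine G.master S hcard ha hb hc hd hloop hvS g p (houtA g hout) hBB ?_ ?_
      · intro _ _
        show G.valence e.2 = 3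
        rw [DiGraph.valence, hout, hin, Finset.card_singleton,
          Finset.card_insert_of_notMem (by simpa using hpq), Finset.card_singleton]
      · intro _ x hxI hadj
        rcases hadj with h1 | h2
        · rw [houtA g hout x hxI h1]; exact hgEi
        · rw [hBB x hxI h2]; exact hpEi
    · -- Cond3 : no incoming edges
      obtain ⟨-, -, hin⟩ := h
      rw [hin] at heIn
      exact absurd heIn (Finset.notMem_empty e)
    · -- Cond4 : internal bivalent, incoming external
      obtain ⟨hVi, ⟨g, hout, hgEi⟩, ⟨f, hin, hfEe⟩⟩ := h
      rw [hin] at heIn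
      have hef : e = f := by simpa using heIn
      subst hef
      have hBB : ∀ x ∈ G.inducedE S, x.2 = e.2 → x = e := by
        intro x hxI hx2
        have hxin : x ∈ G.inE e.2 := G.mem_inE'.mpr ⟨(G.mem_inducedE'.mp hxI).1, hx2⟩
        rw [hin] at hxin
        simpa using hxin
      refine G.master S hcard ha hb hc hd hloop hvS g e (houtA g hout) hBB ?_ ?_
      · intro _ heiI
        exact absurd (G.mem_inducedE'.mp heiI).2.1 hu
      · intro _ x hxI hadj
        rcases hadj with h1 | h2
        · rw [houtA g hout x hxI h1]; exact hgEi
        · exact absurd (G.mem_inducedE'.mp hxI).2.1 (hBB x hxI h2 ▸ hu)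
    · -- Cond5 : incoming edge is internal
      obtain ⟨-, -, ⟨f, hin, hfEi⟩⟩ := h
      rw [hin] at heIn
      have hef : e = f := by simpa using heIn
      exact heI (hef ▸ hfEi)
  -- Part (ii)
  have part2 : ∀ e : V × V, G.IsLeg e → e.1 ∈ S → e.2 ∈ S := by
    rintro e ⟨heEe, huni⟩ h1
    by_contra h2
    obtain ⟨-, ⟨g, hout, -⟩, hinE⟩ := G.cond3_of_univalent hG huni
    have heg : e = g := by
      have : e ∈ G.outE e.1 := G.mem_outE'.mpr ⟨(G.mem_Ee'.mp heEe).1, rfl⟩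
      rw [hout] at this
      simpa using this
    subst heg
    have hAE : ((G.inducedE S).filter fun x => x.1 = e.1) = ∅ := by
      rw [Finset.eq_empty_iff_forall_notMem]
      intro x hx
      obtain ⟨hxI, hx1⟩ := Finset.mem_filter.mp hx
      obtain ⟨hxE, -, hx2S⟩ := G.mem_inducedE'.mp hxI
      have : x ∈ G.outE e.1 := G.mem_outE'.mpr ⟨hxE, hx1⟩
      rw [hout] at this
      have : x = e := by simpa using this
      subst this
      exact h2 hx2S
    have hBE : ((G.inducedE S).filter fun x => x.2 = e.1) = ∅ := by
      rw [Finset.eq_empty_iff_forall_notMem]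
      intro x hx
      obtain ⟨hxI, hx2⟩ := Finset.mem_filter.mp hx
      have : x ∈ G.inE e.1 := G.mem_inE'.mpr ⟨(G.mem_inducedE'.mp hxI).1, hx2⟩
      rw [hinE] at this
      exact absurd this (Finset.notMem_empty x)
    have hpos := G.valenceIn_pos hb hcard h1
    rw [DiGraph.valenceIn, hAE, hBE] at hpos
    simp at hpos
  -- Part (iii), first half
  have part3a : ∃ v ∈ S, ¬ G.Univalent v := by
    obtain ⟨u, hu, w, hw, huw⟩ := Finset.one_lt_card.mp hcard
    by_cases h : G.Univalent u
    · obtain ⟨-, ⟨g, hout, hgEe⟩, hinE⟩ := G.cond3_of_univalent hG h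
      rcases (hb u hu w hw).cases_head with heq | ⟨c, hc, -⟩
      · exact absurd heq huw
      rcases hc with hstep | hstep
      · obtain ⟨hE, -, hcS⟩ := G.mem_inducedE'.mp hstep
        exact ⟨c, hcS, G.not_univalent_target hG (e := (u, c)) hE⟩
      · exfalso
        have hE := (G.mem_inducedE'.mp hstep).1
        have : (c, u) ∈ G.inE u := G.mem_inE'.mpr ⟨hE, rfl⟩
        rw [hinE] at this
        exact absurd this (Finset.notMem_empty _)
    · exact ⟨u, hu, h⟩
  -- Part (iii), second half
  have part3b : ∃ v : V, ¬ G.Univalent v ∧ v ∉ S := by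
    obtain ⟨x, hx⟩ : ∃ x, x ∉ S := by
      by_contra h
      push_neg at h
      exact hproper (Finset.eq_univ_iff_forall.mpr h)
    by_cases hux : G.Univalent x
    · obtain ⟨-, ⟨g, hout, hgEe⟩, -⟩ := G.cond3_of_univalent hG hux
      have hgE : g ∈ G.E := (G.mem_Ee'.mp hgEe).1
      have hg1 : g.1 = x := by
        have : g ∈ G.outE x := by rw [hout]; exact Finset.mem_singleton_self g
        exact (G.mem_outE'.mp this).2
      refine ⟨g.2, G.not_univalent_target hG hgE, fun hgS => ?_⟩
      exact hx (hg1 ▸ part1 g hgEe hgS)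
    · exact ⟨x, hux, hx⟩
  exact ⟨part1, part2, part3a, part3b⟩
end
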